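/- arXiv:2510.12906 — 5 statements merged into one kernel-verified Lean document; each statement's English description precedes it below -/
import Mathlib

section
/- The set FS({4^n : n ≥ 1}) of all finite sums of distinct powers 4^n (n ≥ 1) has zero upper Banach density; that is, for every ε > 0 there exists N such that for all n ≥ N and all M, the number of elements of FS({4^n}) in the interval [M, M+n] is less than ε·n. -/
/-- The finite sums set `FS({4^n : n ≥ 1})`: all sums of distinct powers `4^i`, `i ≥ 1`. -/
def FS4 : Set ℕ := {s | ∃ F : Finset ℕ, F.Nonempty ∧ (∀ i ∈ F, 1 ≤ i) ∧ s = ∑ i ∈ F, 4 ^ i}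

lemma sum_pow_four_lt (k : ℕ) : ∑ i ∈ Finset.range k, 4 ^ i < 4 ^ k := by
  induction k with
  | zero => simp
  | succ k ih =>
    rw [Finset.sum_range_succ, pow_succ]
    omega

lemma FS4_mod (k : ℕ) {s : ℕ} (hs : s ∈ FS4) :
    s % 4 ^ k ∈ (Finset.Icc 1 (k - 1)).powerset.image (fun F => ∑ i ∈ F, 4 ^ i) := by
  obtain ⟨F, -, h1, rfl⟩ := hs
  set A := F.filter (fun i => i < k) with hA
  have hsplit : ∑ i ∈ F, 4 ^ i
      = (∑ i ∈ A, 4 ^ i) + ∑ i ∈ F.filter (fun i => ¬ i < k), 4 ^ i :=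
    (Finset.sum_filter_add_sum_filter_not F _ _).symm
  have hdvd : 4 ^ k ∣ ∑ i ∈ F.filter (fun i => ¬ i < k), 4 ^ i := by
    refine Finset.dvd_sum fun i hi => ?_
    exact pow_dvd_pow 4 (Nat.le_of_not_lt (Finset.mem_filter.mp hi).2)
  obtain ⟨m, hm⟩ := hdvd
  have hAsub : A ⊆ Finset.Icc 1 (k - 1) := by
    intro i hi
    have h2 := Finset.mem_filter.mp hi
    have := h1 i h2.1
    have := h2.2
    simp only [Finset.mem_Icc]
    omega
  have hAlt : ∑ i ∈ A, 4 ^ i < 4 ^ k := by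
    calc ∑ i ∈ A, 4 ^ i ≤ ∑ i ∈ Finset.range k, 4 ^ i := by
          refine Finset.sum_le_sum_of_subset ?_
          intro i hi
          simpa using (Finset.mem_filter.mp hi).2
      _ < 4 ^ k := sum_pow_four_lt k
  have hmod : (∑ i ∈ F, 4 ^ i) % 4 ^ k = ∑ i ∈ A, 4 ^ i := by
    rw [hsplit, hm, Nat.add_mul_mod_self_left, Nat.mod_eq_of_lt hAlt]
  rw [hmod]
  exact Finset.mem_image.mpr ⟨A, Finset.mem_powerset.mpr hAsub, rfl⟩

/-- `FS({4^n : n ≥ 1})` has zero upper Banach density: for every `ε > 0` there is `N` such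
that for all `n ≥ N` and all `M`, the number of its elements in `[M, M+n]` is `< ε·n`. -/
theorem FS4_zero_banach_density :
    ∀ ε : ℝ, 0 < ε → ∃ N : ℕ, ∀ n : ℕ, N ≤ n → ∀ M : ℕ,
      ((FS4 ∩ Set.Icc M (M + n)).ncard : ℝ) < ε * n := by
  intro ε hε
  obtain ⟨k, hk⟩ := exists_pow_lt_of_lt_one (by linarith : (0:ℝ) < ε/2)
    (by norm_num : (1/2:ℝ) < 1)
  obtain ⟨N, hN⟩ := exists_nat_gt ((2:ℝ)^(k+2) / ε)
  refine ⟨N, fun n hn M => ?_⟩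
  have hpow : (0:ℕ) < 4 ^ k := by positivity
  set R := (Finset.Icc 1 (k-1)).powerset.image (fun F => ∑ i ∈ F, 4 ^ i) with hRdef
  set T := (Finset.Icc (M / 4^k) ((M+n) / 4^k)) ×ˢ R with hTdef
  have hmap : Set.MapsTo (fun s => (s / 4^k, s % 4^k)) (FS4 ∩ Set.Icc M (M+n)) ↑T := by
    rintro s ⟨hs1, hs2⟩
    simp only [hTdef, Finset.coe_product, Set.mem_prod, Finset.mem_coe, Finset.mem_Icc]
    exact ⟨⟨Nat.div_le_div_right hs2.1, Nat.div_le_div_right hs2.2⟩, FS4_mod k hs1⟩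
  have hinj : Set.InjOn (fun s => (s / 4^k, s % 4^k)) (FS4 ∩ Set.Icc M (M+n)) := by
    intro a _ b _ h
    have h1 : a / 4^k = b / 4^k := congrArg Prod.fst h
    have h2 : a % 4^k = b % 4^k := congrArg Prod.snd h
    calc a = 4^k * (a / 4^k) + a % 4^k := (Nat.div_add_mod a _).symm
      _ = 4^k * (b / 4^k) + b % 4^k := by rw [h1, h2]
      _ = b := Nat.div_add_mod b _
  have hcard : (FS4 ∩ Set.Icc M (M+n)).ncard ≤ T.card := by
    have := Set.ncard_le_ncard_of_injOn _ hmap hinj T.finite_toSet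
    simpa using this
  -- bound T.card
  have hdiv : (M + n) / 4^k ≤ M / 4^k + n / 4^k + 1 := by
    rw [Nat.add_div hpow]
    split <;> omega
  have hIcc : (Finset.Icc (M / 4^k) ((M+n) / 4^k)).card ≤ n / 4^k + 2 := by
    rw [Nat.card_Icc]
    refine Nat.sub_le_iff_le_add.mpr ?_
    linarith [hdiv]
  have hRcard : R.card ≤ 2 ^ k := by
    calc R.card ≤ (Finset.Icc 1 (k-1)).powerset.card := Finset.card_image_le
      _ = 2 ^ (Finset.Icc 1 (k-1)).card := Finset.card_powerset _
      _ ≤ 2 ^ k := Nat.pow_le_pow_right (by norm_num) (by rw [Nat.card_Icc]; omega)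
  have hTcard : T.card ≤ (n / 4^k + 2) * 2 ^ k := by
    rw [hTdef, Finset.card_product]
    exact Nat.mul_le_mul hIcc hRcard
  have htotal : (FS4 ∩ Set.Icc M (M+n)).ncard ≤ (n / 4^k + 2) * 2 ^ k :=
    hcard.trans hTcard
  -- pass to ℝ
  have hcast : ((FS4 ∩ Set.Icc M (M+n)).ncard : ℝ) ≤ (((n / 4^k : ℕ) : ℝ) + 2) * 2 ^ k := by
    have := (Nat.cast_le (α := ℝ)).mpr htotal
    push_cast at this ⊢
    linarith
  have hq : ((n / 4^k : ℕ) : ℝ) ≤ (n : ℝ) / 4 ^ k := by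
    have := Nat.cast_div_le (m := n) (n := 4^k) (α := ℝ)
    push_cast at this
    exact this
  have h4pos : (0:ℝ) < 4 ^ k := by positivity
  have h2pos : (0:ℝ) < 2 ^ k := by positivity
  -- n is large
  have hNn : ((2:ℝ)^(k+2)) / ε < (n : ℝ) := lt_of_lt_of_le hN (by exact_mod_cast hn)
  have hεn : (2:ℝ)^(k+2) < ε * n := by
    rw [div_lt_iff₀ hε] at hNn
    linarith [mul_comm ε (n:ℝ)]
  have hnpos : (0:ℝ) < n := by
    have : (0:ℝ) < (2:ℝ)^(k+2) / ε := by positivity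
    linarith
  have hhalf : (2:ℝ) ^ k / 4 ^ k < ε / 2 := by
    have he : (2:ℝ) ^ k / 4 ^ k = (1/2) ^ k := by
      rw [← div_pow]; norm_num
    rw [he]
    exact hk
  have h1 : (n : ℝ) * ((2:ℝ)^k / 4^k) ≤ (n : ℝ) * (ε / 2) :=
    mul_le_mul_of_nonneg_left hhalf.le (Nat.cast_nonneg n)
  have h4u : (2:ℝ)^(k+2) = 4 * 2^k := by ring
  have h2u : 2 * (2:ℝ)^k < ε * n / 2 := by
    rw [h4u] at hεn; linarith
  calc ((FS4 ∩ Set.Icc M (M+n)).ncard : ℝ)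
      ≤ (((n / 4^k : ℕ) : ℝ) + 2) * 2 ^ k := hcast
    _ ≤ ((n : ℝ) / 4 ^ k + 2) * 2 ^ k := by nlinarith
    _ = (n : ℝ) * ((2:ℝ)^k / 4^k) + 2 * 2^k := by ring
    _ < ε * n := by linarith
end

section
/- If x = 4^{i_1} + 4^{i_2} + ... + 4^{i_k} with i_1 < i_2 < ... < i_k (all i_j ≥ 1), then the number of elements of FS({4^n : n ≥ 1}) lying in the interval [1, x] equals 2^{i_1 - 1} + 2^{i_2 - 1} + ... + 2^{i_k - 1}. -/
/-!
Writing `∑_{i ∈ G} 4^i = 4 · ∑_{i ∈ G} 4^(i-1)`, an element of `FS4` is `4 · φ(n)`, where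
`n = ∑_{i ∈ G} 2^(i-1) ≥ 1` and `φ = Nat.binaryInBase 4` reads the binary digits of `n` in
base `4`. Comparing `∑ 2^i` or `∑ 4^i` over two digit sets both amount to comparing the sets
in colex order, so `φ` is strictly monotone, and the elements of `FS4` in `[1, 4 · φ(N)]` are
exactly the `4 · φ(n)` with `1 ≤ n ≤ N`.
-/

open Finset

namespace Nat

def binaryInBase (b n : ℕ) : ℕ := ∑ i ∈ n.bitIndices.toFinset, b ^ i

@[simp] lemma binaryInBase_zero (b : ℕ) : binaryInBase b 0 = 0 := by
  simp [binaryInBase]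

@[simp] lemma binaryInBase_sum_two_pow (b : ℕ) (s : Finset ℕ) :
    binaryInBase b (∑ i ∈ s, 2 ^ i) = ∑ i ∈ s, b ^ i := by
  rw [binaryInBase, toFinset_bitIndices_sum_two_pow]

lemma binaryInBase_strictMono {b : ℕ} (hb : 2 ≤ b) : StrictMono (binaryInBase b) :=
  (geomSum_ofColex_strictMono hb).comp orderIsoColex.strictMono

end Nat

open Nat

lemma Finset.exists_map_add_one_eq {G : Finset ℕ} (hG : ∀ i ∈ G, 1 ≤ i) :
    ∃ H : Finset ℕ, H.map (addRightEmbedding 1) = G := by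
  refine ⟨G.image (· - 1), ?_⟩
  ext i
  simp only [mem_map, mem_image, addRightEmbedding_apply]
  constructor
  · rintro ⟨_, ⟨j, hj, rfl⟩, rfl⟩
    rwa [Nat.sub_add_cancel (hG j hj)]
  · intro hi
    exact ⟨i - 1, ⟨i, hi, rfl⟩, Nat.sub_add_cancel (hG i hi)⟩

lemma Finset.sum_pow_map_add_one (b : ℕ) (H : Finset ℕ) :
    ∑ i ∈ H.map (addRightEmbedding 1), b ^ i = b * ∑ j ∈ H, b ^ j := by
  simp [sum_map, pow_succ', mul_sum]

lemma FS4_eq_image : FS4 = (fun n ↦ 4 * binaryInBase 4 n) '' Set.Ici 1 := by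
  ext s
  constructor
  · rintro ⟨G, hG, hG1, rfl⟩
    obtain ⟨H, rfl⟩ := exists_map_add_one_eq hG1
    refine ⟨∑ j ∈ H, 2 ^ j, ?_, ?_⟩
    · obtain ⟨j, hj⟩ := map_nonempty.mp hG
      exact Nat.one_le_two_pow.trans (single_le_sum (fun _ _ ↦ zero_le _) hj)
    · simp only [sum_pow_map_add_one, binaryInBase_sum_two_pow]
  · rintro ⟨n, hn, rfl⟩
    refine ⟨n.bitIndices.toFinset.map (addRightEmbedding 1), ?_, by simp, ?_⟩
    · rw [map_nonempty, List.toFinset_nonempty_iff]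
      intro h
      have hsum := sum_map_two_pow_bitIndices n
      simp only [h, List.map_nil, List.sum_nil] at hsum
      exact absurd hn (by simp [← hsum])
    · rw [sum_pow_map_add_one]
      rfl

lemma ncard_FS4_inter_Icc (N : ℕ) : (FS4 ∩ Set.Icc 1 (4 * binaryInBase 4 N)).ncard = N := by
  have hmono : StrictMono fun n ↦ 4 * binaryInBase 4 n :=
    (binaryInBase_strictMono (by norm_num)).const_mul (by norm_num)
  have hset : FS4 ∩ Set.Icc 1 (4 * binaryInBase 4 N) =
      (fun n ↦ 4 * binaryInBase 4 n) '' Set.Icc 1 N := by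
    rw [FS4_eq_image]
    ext s
    simp only [Set.mem_inter_iff, Set.mem_image, Set.mem_Ici, Set.mem_Icc]
    constructor
    · rintro ⟨⟨n, hn, rfl⟩, -, hnN⟩
      exact ⟨n, ⟨hn, hmono.le_iff_le.mp hnN⟩, rfl⟩
    · rintro ⟨n, ⟨hn, hnN⟩, rfl⟩
      have hpos := hmono (Nat.lt_of_succ_le hn)
      simp only [binaryInBase_zero] at hpos
      exact ⟨⟨n, hn, rfl⟩, hpos, hmono.monotone hnN⟩
  rw [hset, Set.ncard_image_of_injective _ hmono.injective, ← coe_Icc, Set.ncard_coe_finset,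
    Nat.card_Icc, Nat.add_sub_cancel]

theorem FS4_count_up_to_general (F : Finset ℕ) (h1 : ∀ i ∈ F, 1 ≤ i) :
    (FS4 ∩ Set.Icc 1 (∑ i ∈ F, 4 ^ i)).ncard = ∑ i ∈ F, 2 ^ (i - 1) := by
  obtain ⟨H, rfl⟩ := exists_map_add_one_eq h1
  rw [sum_pow_map_add_one, ← binaryInBase_sum_two_pow, ncard_FS4_inter_Icc, sum_map]
  simp

/-- If `x = 4^{i₁} + ⋯ + 4^{i_k}` with distinct indices `i_j ≥ 1`, then the number of
elements of `FS({4^n : n ≥ 1})` in `[1, x]` equals `2^{i₁-1} + ⋯ + 2^{i_k-1}`. -/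
theorem FS4_count_up_to (F : Finset ℕ) (hF : F.Nonempty) (h1 : ∀ i ∈ F, 1 ≤ i) :
    (FS4 ∩ Set.Icc 1 (∑ i ∈ F, 4 ^ i)).ncard = ∑ i ∈ F, 2 ^ (i - 1) :=
  FS4_count_up_to_general F h1
end

section
/- Let A = P ∩ T where P ⊆ ℕ₀ is syndetic and T ⊆ ℕ₀ is thick, and let x ∈ {0,1}^{ℕ₀} be the characteristic function of A. Then the orbit closure of x under the left shift contains a point y which is the characteristic function of a syndetic set. -/
/-- The left shift on `{0,1}^ℕ₀`. -/
def shift (a : ℕ → Bool) : ℕ → Bool := fun i => a (i + 1)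

lemma shift_iterate (x : ℕ → Bool) : ∀ t i, shift^[t] x i = x (i + t) := by
  intro t
  induction t with
  | zero => intro i; simp
  | succ t ih =>
    intro i
    rw [Function.iterate_succ', Function.comp_apply]
    show shift^[t] x (i + 1) = _
    rw [ih]
    ring_nf

/-- `S ⊆ ℕ₀` is syndetic if `⋃_{i=0}^{n} (S - i) ⊇ ℕ₀` for some `n`. -/
def Syndetic (S : Set ℕ) : Prop := ∃ n : ℕ, ∀ m : ℕ, ∃ i ≤ n, m + i ∈ S

/-- `T ⊆ ℕ₀` is thick if it contains arbitrarily long intervals. -/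
def Thick (T : Set ℕ) : Prop := ∀ n : ℕ, ∃ t : ℕ, ∀ i ≤ n, t + i ∈ T

/-- If `A = P ∩ T` with `P` syndetic and `T` thick, and `x` is the characteristic function
of `A`, then the orbit closure of `x` under the left shift contains the characteristic
function of a syndetic set. -/
theorem orbit_closure_contains_syndetic_point (P T : Set ℕ)
    (hP : Syndetic P) (hT : Thick T) (x : ℕ → Bool)
    (hx : ∀ n, x n = true ↔ n ∈ P ∩ T) :
    ∃ y ∈ closure {y : ℕ → Bool | ∃ n : ℕ, y = shift^[n] x},
      ∃ S : Set ℕ, Syndetic S ∧ ∀ n, y n = true ↔ n ∈ S := by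
  obtain ⟨n, hn⟩ := hP
  -- choose t k with [t k, t k + k] ⊆ T
  choose t ht using hT
  set u : ℕ → (ℕ → Bool) := fun k => shift^[t k] x with hu
  have hmem : ∀ k, u k ∈ closure {y : ℕ → Bool | ∃ n : ℕ, y = shift^[n] x} := fun k =>
    subset_closure ⟨t k, rfl⟩
  have hcomp : IsCompact (closure {y : ℕ → Bool | ∃ n : ℕ, y = shift^[n] x}) :=
    isClosed_closure.isCompact
  obtain ⟨y, hyC, φ, hφ, hlim⟩ := hcomp.tendsto_subseq hmem
  refine ⟨y, hyC, {m | y m = true}, ⟨n, ?_⟩, fun m => Iff.rfl⟩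
  intro m
  by_contra hcon
  push_neg at hcon
  have hfalse : ∀ i ≤ n, y (m + i) = false := by
    intro i hi
    have := hcon i hi
    simpa [Set.mem_setOf_eq] using Bool.eq_false_iff.mpr (by simpa using this)
  -- coordinatewise convergence: eventually u (φ k) (m+i) = y (m+i) for all i ≤ n
  have hev : ∀ᶠ k in Filter.atTop, ∀ i ∈ Finset.range (n + 1),
      u (φ k) (m + i) = y (m + i) := by
    rw [Filter.eventually_all_finset]
    intro i _
    have hcoord : Filter.Tendsto (fun k => u (φ k) (m + i)) Filter.atTop (nhds (y (m + i))) :=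
      ((continuous_apply (m + i)).continuousAt.tendsto.comp hlim)
    exact hcoord.eventually_mem ((isOpen_discrete {y (m + i)}).mem_nhds rfl)
  have hbig : ∀ᶠ k in Filter.atTop, m + n ≤ k := Filter.eventually_ge_atTop (m + n)
  obtain ⟨k, hk1, hk2⟩ := (hev.and hbig).exists
  -- syndeticity of P at t (φ k) + m
  obtain ⟨i, hi, hiP⟩ := hn (t (φ k) + m)
  have hφk : m + i ≤ φ k := le_trans (by omega) (le_trans hk2 (hφ.le_apply))
  have hiT : t (φ k) + (m + i) ∈ T := ht (φ k) (m + i) hφk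
  have hxT : x (t (φ k) + m + i) = true := by
    rw [hx]
    exact ⟨hiP, by rw [add_assoc]; exact hiT⟩
  have : u (φ k) (m + i) = true := by
    rw [hu]
    simp only [shift_iterate]
    rw [show m + i + t (φ k) = t (φ k) + m + i by ring]
    exact hxT
  rw [hk1 i (Finset.mem_range.mpr (by omega)), hfalse i hi] at this
  exact Bool.false_ne_true this
end

section
/- Let M ∈ ℕ and let Y ⊆ ℕ be a set such that for some sequence (N_t)_{t ≥ M}, whenever a ∈ Y and a + t ∈ Y with t ≥ M, we have a < N_t (i.e. Y contains only finitely many pairs at each difference t ≥ M). Then Y does not contain any sumset B + C with B, C ⊆ ℕ infinite. -/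
/-- If `Y` contains, for each difference `t ≥ M`, only boundedly many pairs `(a, a+t)`
(namely `a < N t`), then `Y` contains no sumset `B + C` with `B, C` infinite. -/
theorem no_sumset_in_difference_bounded_set (M : ℕ) (Y : Set ℕ) (N : ℕ → ℕ)
    (h : ∀ a t : ℕ, M ≤ t → a ∈ Y → a + t ∈ Y → a < N t) :
    ∀ B C : Set ℕ, B.Infinite → C.Infinite → ¬ (∀ b ∈ B, ∀ c ∈ C, b + c ∈ Y) := by
  intro B C hB hC hsub
  obtain ⟨c₁, hc₁⟩ := hC.nonempty
  obtain ⟨c₂, hc₂, hlt⟩ := hC.exists_gt (c₁ + M)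
  set t := c₂ - c₁ with ht
  have htM : M ≤ t := by omega
  obtain ⟨b, hb, hbN⟩ := hB.exists_gt (N t)
  have h1 : b + c₁ ∈ Y := hsub b hb c₁ hc₁
  have h2 : b + c₁ + t ∈ Y := by
    have : b + c₁ + t = b + c₂ := by omega
    rw [this]; exact hsub b hb c₂ hc₂
  have := h (b + c₁) t htM h1 h2
  omega
end

section
/- In any finite coloring ℕ₀ = A_1 ∪ ... ∪ A_ℓ, at least one color class A_j is piecewise syndetic. -/
/-- A set is piecewise syndetic if it is the intersection of a syndetic and a thick set. -/
def PiecewiseSyndetic (A : Set ℕ) : Prop := ∃ P T : Set ℕ, Syndetic P ∧ Thick T ∧ A = P ∩ T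

/-- In any finite coloring of `ℕ₀`, some color class is piecewise syndetic. -/
theorem exists_piecewise_syndetic_color (ℓ : ℕ) (χ : ℕ → Fin ℓ) :
    ∃ j : Fin ℓ, PiecewiseSyndetic (χ ⁻¹' {j}) := by
  by_cases H : ∃ j : Fin ℓ, ∃ d : ℕ, ∀ L : ℕ, ∃ t : ℕ, ∀ m, t ≤ m → m ≤ t + L →
      ∃ i ≤ d, χ (m + i) = j
  · obtain ⟨j, d, hQ⟩ := H
    set T : Set ℕ := {m | ∃ i ≤ d, χ (m + i) = j} with hT
    refine ⟨j, (χ ⁻¹' {j}) ∪ Tᶜ, T, ?_, ?_, ?_⟩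
    · refine ⟨d, fun m => ?_⟩
      by_cases h : m ∈ T
      · obtain ⟨i, hi, hχ⟩ := h
        exact ⟨i, hi, Or.inl hχ⟩
      · refine ⟨0, Nat.zero_le d, Or.inr ?_⟩
        simpa [hT] using h
    · intro n
      obtain ⟨t, ht⟩ := hQ n
      exact ⟨t, fun i hi => ht (t + i) (Nat.le_add_right _ _) (by omega)⟩
    · ext m
      constructor
      · intro hm
        exact ⟨Or.inl hm, ⟨0, Nat.zero_le d, by simpa using hm⟩⟩
      · rintro ⟨h1 | h1, h2⟩
        · exact h1
        · exact absurd h2 h1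
  · push_neg at H
    have B : ∀ k, k ≤ ℓ → ∀ n, ∃ s : ℕ, ∀ m, s ≤ m → m < s + n →
        ∀ j : Fin ℓ, (j : ℕ) < k → χ m ≠ j := by
      intro k
      induction k with
      | zero => exact fun _ n => ⟨0, fun m _ _ j hj => absurd hj (Nat.not_lt_zero _)⟩
      | succ k ih =>
        intro hk n
        have hkℓ : k < ℓ := hk
        obtain ⟨L, hL⟩ := H ⟨k, hkℓ⟩ (n - 1)
        obtain ⟨s, hs⟩ := ih (le_of_lt hkℓ) (L + n)
        obtain ⟨m, hm1, hm2, hm3⟩ := hL s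
        refine ⟨m, fun m' h1 h2 j hj => ?_⟩
        rcases Nat.lt_succ_iff_lt_or_eq.mp hj with h | h
        · exact hs m' (hm1.trans h1) (by omega) j h
        · intro hχ
          have h3 := hm3 (m' - m) (by omega)
          rw [show m + (m' - m) = m' by omega] at h3
          exact h3 (by rw [hχ]; exact Fin.ext h)
    obtain ⟨s, hs⟩ := B ℓ le_rfl 1
    exact absurd rfl (hs s le_rfl (by omega) (χ s) (χ s).isLt)
end
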